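/- arXiv:2203.06371 — 2 statements merged into one kernel-verified Lean document; each statement's English description precedes it below -/
import Mathlib

section
/- Let Σ be a symmetric positive definite p×p matrix, μ₁ ≠ μ₂ ∈ R^p, π₁, π₂ > 0 with π₁+π₂=1, and let θ* satisfy θ* = π₁π₂ Σ⁻¹(μ₁ − μ₂)[1 − (μ₁−μ₂)ᵀθ*]. Define c* = 1/[π₁π₂ − π₁π₂(μ₁−μ₂)ᵀθ*]. Then c* > 0 and Σ⁻¹(μ₁ − μ₂) = c* θ*. -/
open Matrix

theorem bayes_direction_is_positive_multiple {p : ℕ}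
    (S : Matrix (Fin p) (Fin p) ℝ) (hS : S.PosDef)
    (μ₁ μ₂ θ : Fin p → ℝ) (hμ : μ₁ ≠ μ₂)
    (π₁ π₂ : ℝ) (hπ₁ : 0 < π₁) (hπ₂ : 0 < π₂) (hsum : π₁ + π₂ = 1)
    (hθ : θ = (π₁ * π₂ * (1 - (μ₁ - μ₂) ⬝ᵥ θ)) • S⁻¹.mulVec (μ₁ - μ₂))
    (c : ℝ) (hc : c = 1 / (π₁ * π₂ - π₁ * π₂ * ((μ₁ - μ₂) ⬝ᵥ θ))) :
    0 < c ∧ S⁻¹.mulVec (μ₁ - μ₂) = c • θ := by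
  set d : Fin p → ℝ := μ₁ - μ₂ with hd
  have hdne : d ≠ 0 := sub_ne_zero.mpr hμ
  set a : ℝ := d ⬝ᵥ S⁻¹.mulVec d with ha
  have hapos : 0 < a := by
    have := hS.inv.re_dotProduct_pos hdne
    simpa [ha] using this
  set k : ℝ := π₁ * π₂ * (1 - d ⬝ᵥ θ) with hk
  have hdθ : d ⬝ᵥ θ = k * a := by
    rw [hθ]; simp [dotProduct_smul, ha, mul_comm]
  have hππ : 0 < π₁ * π₂ := mul_pos hπ₁ hπ₂
  have hkval : k * (1 + π₁ * π₂ * a) = π₁ * π₂ := by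
    have heq := hk
    rw [hdθ] at heq
    nlinarith [heq]
  have hden : 0 < 1 + π₁ * π₂ * a := by positivity
  have hkpos : 0 < k := by
    have : k = π₁ * π₂ / (1 + π₁ * π₂ * a) := by
      field_simp; linarith [hkval]
    rw [this]; positivity
  have hck : c = 1 / k := by
    rw [hc, hk]; ring_nf
  constructor
  · rw [hck]; positivity
  · rw [hck, hθ]
    rw [smul_smul]
    congr 1
    field_simp
    rw [one_smul]
end

section
/- Let δ ∈ R^p, let Σ be symmetric positive definite, let θ̂ ∈ R^p with Σ^{1/2}θ̂ ≠ 0, and set Δ = ‖Σ^{-1/2}δ‖₂. Then |Δ − δᵀθ̂ / ‖Σ^{1/2}θ̂‖₂| ≤ ‖Σ^{-1/2}δ − Σ^{1/2}θ̂‖₂² / Δ + ‖Σ^{-1/2}δ − Σ^{1/2}θ̂‖₂, assuming Δ > 0. -/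
open Matrix

/-- Euclidean norm of a plain vector. -/
noncomputable def enorm' {p : ℕ} (v : Fin p → ℝ) : ℝ := Real.sqrt (v ⬝ᵥ v)

lemma enorm'_eq {p : ℕ} (v : Fin p → ℝ) :
    enorm' v = ‖(WithLp.equiv 2 (Fin p → ℝ)).symm v‖ := by
  rw [enorm', EuclideanSpace.norm_eq]
  congr 1
  simp [dotProduct, Real.norm_eq_abs, sq_abs, sq]

lemma inner_eq' {p : ℕ} (u v : Fin p → ℝ) :
    (inner ℝ ((WithLp.equiv 2 (Fin p → ℝ)).symm u) ((WithLp.equiv 2 (Fin p → ℝ)).symm v) : ℝ)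
      = u ⬝ᵥ v := by
  simp [PiLp.inner_apply, dotProduct, RCLike.inner_apply, mul_comm]

lemma key_ineq {E : Type*} [NormedAddCommGroup E] [InnerProductSpace ℝ E] (u v : E)
    (hu : 0 < ‖u‖) (hv : 0 < ‖v‖) :
    |‖u‖ - (inner ℝ u v : ℝ) / ‖v‖| ≤ ‖u - v‖ ^ 2 / ‖u‖ + ‖u - v‖ := by
  set a := ‖u‖ with ha
  set s := ‖v‖ with hs
  set t := ‖u - v‖ with htdef
  have hip : (inner ℝ u v : ℝ) = (a^2 + s^2 - t^2)/2 := by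
    have h := norm_sub_sq_real u v
    rw [← htdef, ← ha, ← hs] at h
    linarith
  have hcs : (inner ℝ u v : ℝ) ≤ a * s := real_inner_le_norm u v
  have ht : 0 ≤ t := norm_nonneg _
  have htri : t ≤ a + s := by
    simpa [← ha, ← hs, ← htdef] using norm_sub_le u v
  have htri2 : a ≤ t + s := by
    have := norm_add_le (u - v) v
    simpa [← ha, ← hs, ← htdef] using this
  have habs : (a - t)^2 ≤ s^2 := by nlinarith
  rw [abs_of_nonneg (by
    have : (inner ℝ u v : ℝ) / s ≤ a := by
      rw [div_le_iff₀ hv]; exact hcs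
    linarith)]
  rw [hip]
  have expand : a - ((a^2+s^2-t^2)/2)/s = (2*a*s - a^2 - s^2 + t^2)/(2*s) := by
    field_simp; ring
  have expand2 : t^2/a + t = (t^2 + a*t)/a := by field_simp
  rw [expand, expand2, div_le_div_iff₀ (by positivity) hu]
  nlinarith [mul_nonneg (sub_nonneg.mpr habs) ht, mul_nonneg (sub_nonneg.mpr habs) hu.le,
    mul_nonneg (sub_nonneg.mpr habs) hv.le, sq_nonneg (a - s), sq_nonneg (a - t),
    mul_pos hu hv, mul_nonneg ht hv.le, mul_nonneg ht hu.le]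

theorem normalized_inner_product_deviation_bound {p : ℕ}
    (S R : Matrix (Fin p) (Fin p) ℝ) (hS : S.PosDef) (hR : R.PosDef)
    (hRR : R * R = S) (δ θh : Fin p → ℝ)
    (hθ : R.mulVec θh ≠ 0) (hΔ : 0 < enorm' (R⁻¹.mulVec δ)) :
    |enorm' (R⁻¹.mulVec δ) - (δ ⬝ᵥ θh) / enorm' (R.mulVec θh)| ≤
      enorm' (R⁻¹.mulVec δ - R.mulVec θh) ^ 2 / enorm' (R⁻¹.mulVec δ) +
        enorm' (R⁻¹.mulVec δ - R.mulVec θh) := by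
  set u := R⁻¹.mulVec δ with hu
  set v := R.mulVec θh with hv
  have hdet : IsUnit R.det := isUnit_iff_ne_zero.mpr (ne_of_gt hR.det_pos)
  have hδ : δ = R.mulVec u := by
    rw [hu, Matrix.mulVec_mulVec, Matrix.mul_nonsing_inv R hdet, Matrix.one_mulVec]
  have hsym : Rᵀ = R := by
    have := hR.isHermitian
    simpa [Matrix.IsHermitian, Matrix.conjTranspose_eq_transpose_of_trivial] using this
  have hdot : δ ⬝ᵥ θh = u ⬝ᵥ v := by
    rw [hδ, dotProduct_comm, Matrix.dotProduct_mulVec, ← Matrix.mulVec_transpose,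
      hsym, dotProduct_comm, hv]
  have hUpos : 0 < ‖(WithLp.equiv 2 (Fin p → ℝ)).symm u‖ := by
    rw [← enorm'_eq]; exact hΔ
  have hVpos : 0 < ‖(WithLp.equiv 2 (Fin p → ℝ)).symm v‖ := by
    rw [norm_pos_iff]
    simp only [ne_eq, WithLp.equiv_symm_apply, WithLp.toLp_eq_zero]
    exact hθ
  have key := key_ineq ((WithLp.equiv 2 (Fin p → ℝ)).symm u)
    ((WithLp.equiv 2 (Fin p → ℝ)).symm v) hUpos hVpos
  rw [inner_eq', show (WithLp.equiv 2 (Fin p → ℝ)).symm u - (WithLp.equiv 2 (Fin p → ℝ)).symm v = (WithLp.equiv 2 (Fin p → ℝ)).symm (u - v) from rfl, ← enorm'_eq, ← enorm'_eq, ← enorm'_eq] at key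
  rw [hdot]
  exact key
end
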